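/- arXiv:2010.11171 — 6 statements merged into one kernel-verified Lean document; each statement's English description precedes it below -/
import Mathlib

section
/- For bounded nonnegative reals a_t with sum diverging (∑_{t=0}^∞ a_t = ∞), for any C > 0 the series ∑_{t=0}^∞ a_t · exp(-C · ∑_{s=0}^t a_s) converges (is finite). -/
/-- For bounded nonnegative reals `a t` whose series diverges, for any `C > 0`
the series `∑ₜ a t * exp (-C * ∑_{s ≤ t} a s)` converges. -/
theorem stmt_0 (a : ℕ → ℝ) (ha : ∀ t, 0 ≤ a t) (K : ℝ) (hbdd : ∀ t, a t ≤ K)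
    (hdiv : ¬ Summable a) (C : ℝ) (hC : 0 < C) :
    Summable (fun t => a t * Real.exp (-C * ∑ s ∈ Finset.range (t + 1), a s)) := by
  have key : ∀ n, C * ∑ t ∈ Finset.range n, a t * Real.exp (-C * ∑ s ∈ Finset.range (t + 1), a s)
      ≤ 1 - Real.exp (-C * ∑ s ∈ Finset.range n, a s) := by
    intro n
    induction n with
    | zero => simp
    | succ n ih =>
      rw [Finset.sum_range_succ]
      have hsum : ∑ s ∈ Finset.range (n + 1), a s = (∑ s ∈ Finset.range n, a s) + a n :=
        Finset.sum_range_succ _ _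
      set T := ∑ s ∈ Finset.range n, a s with hT
      rw [hsum]
      have hstep : C * (a n * Real.exp (-C * (T + a n)))
          ≤ Real.exp (-C * T) - Real.exp (-C * (T + a n)) := by
        have hid : Real.exp (-C * (T + a n)) * (Real.exp (C * a n) - 1)
            = Real.exp (-C * T) - Real.exp (-C * (T + a n)) := by
          rw [mul_sub, ← Real.exp_add, mul_one]
          ring_nf
        have hexp := Real.add_one_le_exp (C * a n)
        nlinarith [Real.exp_pos (-C * (T + a n)), mul_nonneg hC.le (ha n)]
      rw [mul_add]
      linarith
  apply summable_of_sum_range_le (c := 1 / C)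
  · intro t
    exact mul_nonneg (ha t) (Real.exp_pos _).le
  · intro n
    rw [le_div_iff₀ hC, mul_comm]
    have : 0 < Real.exp (-C * ∑ s ∈ Finset.range n, a s) := Real.exp_pos _
    linarith [key n]
end

section
/- If A ∈ ℝ^{N×B} has i.i.d. columns each uniformly distributed over the standard basis vectors of ℝ^N, then for any fixed Z ∈ ℝ^{N×N}, E[A Aᵀ Z A Aᵀ] = (B/N)·diag(Z) + (B(B−1)/N²)·Z, where diag(Z) is the diagonal matrix with entries Z_{ii}. -/
open MeasureTheory ProbabilityTheory Matrix

/-- Entrywise expectation of a random matrix. -/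
noncomputable def mExp {Ω : Type*} [MeasureSpace Ω] {m n : ℕ}
    (M : Ω → Matrix (Fin m) (Fin n) ℝ) : Matrix (Fin m) (Fin n) ℝ :=
  Matrix.of fun i j => ∫ ω, M ω i j

/-!
If column `b` of `A` is the basis vector `e_{c_b}`, then `A Aᵀ = diag(n)` where `n_i` counts
the columns labelled `i`, so `(A Aᵀ Z A Aᵀ)_{ij} = n_i n_j Z_{ij}`. Expanding
`n_i n_j = ∑_{b,b'} [c_b = i][c_{b'} = j]`, the `B` diagonal pairs `b = b'` contribute
`[i = j]/N` each and the `B(B-1)` off-diagonal pairs contribute `1/N²` each by independence.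
-/

namespace Matrix

variable {ι β : Type*} (R : Type*) [Fintype β] [DecidableEq ι] [Semiring R]

def oneHot (c : β → ι) : Matrix ι β R := of fun i b => if c b = i then 1 else 0

theorem oneHot_mul_transpose (c : β → ι) :
    oneHot R c * (oneHot R c)ᵀ = diagonal fun i => ∑ b, if c b = i then (1 : R) else 0 := by
  refine Matrix.ext fun i k => ?_
  simp only [oneHot, mul_apply, transpose_apply, of_apply, diagonal_apply, ite_zero_mul_ite_zero,
    mul_one]
  split_ifs with h
  · simp [h]
  · exact Finset.sum_eq_zero fun b _ => if_neg fun hb => h (hb.1.symm.trans hb.2)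

end Matrix

theorem Finset.sum_ite_eq_add_mul {β R : Type*} [Fintype β] [DecidableEq β] [Ring R]
    (b : β) (d o : R) :
    ∑ b', (if b = b' then d else o) = d + (Fintype.card β - 1) * o := by
  have h : ∀ b', (if b = b' then d else o) = o + if b = b' then d - o else 0 := by
    intro b'; split_ifs <;> abel
  simp only [h, Finset.sum_add_distrib, Finset.sum_const, Finset.card_univ, Finset.sum_ite_eq,
    Finset.mem_univ, if_true, nsmul_eq_mul]
  noncomm_ring

namespace ProbabilityTheory.iIndepFun

variable {Ω ι β : Type*} [MeasurableSpace Ω] {μ : Measure Ω} [MeasurableSpace ι]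
  [MeasurableSingletonClass ι] [DecidableEq ι] [DecidableEq β] {c : β → Ω → ι}

theorem measureReal_preimage_singleton_inter [IsZeroOrProbabilityMeasure μ]
    (hindep : iIndepFun c μ) (b b' : β) (i j : ι) :
    μ.real (c b ⁻¹' {i} ∩ c b' ⁻¹' {j}) =
      if b = b' then (if i = j then μ.real (c b ⁻¹' {i}) else 0)
      else μ.real (c b ⁻¹' {i}) * μ.real (c b' ⁻¹' {j}) := by
  split_ifs with hb hij
  · subst hb hij
    rw [Set.inter_self]
  · subst hb
    rw [((Set.disjoint_singleton.2 hij).preimage (c b)).inter_eq, measureReal_empty]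
  · simp only [measureReal_def, (hindep.indepFun hb).measure_inter_preimage_eq_mul _ _
      (measurableSet_singleton i) (measurableSet_singleton j), ENNReal.toReal_mul]

theorem integral_sum_ite_eq_mul_sum_ite_eq [Fintype β] [IsProbabilityMeasure μ]
    (hindep : iIndepFun c μ) (hmeas : ∀ b, Measurable (c b)) {p : ℝ}
    (hunif : ∀ b i, μ.real (c b ⁻¹' {i}) = p) (i j : ι) :
    ∫ ω, (∑ b, if c b ω = i then (1 : ℝ) else 0) *
        (∑ b, if c b ω = j then (1 : ℝ) else 0) ∂μ =
      Fintype.card β * ((if i = j then p else 0) + (Fintype.card β - 1) * p ^ 2) := by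
  have hset : ∀ b k, MeasurableSet (c b ⁻¹' {k}) := fun b k =>
    hmeas b (measurableSet_singleton k)
  have hprod : ∀ ω,
      (∑ b, if c b ω = i then (1 : ℝ) else 0) * (∑ b, if c b ω = j then (1 : ℝ) else 0) =
        ∑ b, ∑ b', (c b ⁻¹' {i} ∩ c b' ⁻¹' {j}).indicator 1 ω := by
    intro ω
    classical
    simp only [Finset.sum_mul_sum, Set.indicator_apply, Set.mem_inter_iff, Set.mem_preimage,
      Set.mem_singleton_iff, ite_zero_mul_ite_zero, mul_one, Pi.one_apply]
  have hint : ∀ b b',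
      Integrable ((c b ⁻¹' {i} ∩ c b' ⁻¹' {j}).indicator (1 : Ω → ℝ)) μ :=
    fun b b' => (integrable_const 1).indicator ((hset b i).inter (hset b' j))
  simp only [hprod]
  rw [integral_finsetSum _ fun b _ => integrable_finsetSum _ fun b' _ => hint b b']
  simp only [integral_finsetSum _ fun b' _ => hint _ b',
    integral_indicator_one ((hset _ i).inter (hset _ j)),
    hindep.measureReal_preimage_singleton_inter, hunif, Finset.sum_ite_eq_add_mul,
    Finset.sum_const, Finset.card_univ, nsmul_eq_mul]
  ring

end ProbabilityTheory.iIndepFun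

theorem stmt_3_general {Ω : Type*} [MeasureSpace Ω] [IsProbabilityMeasure (volume : Measure Ω)]
    {N B : ℕ}
    (c : Fin B → Ω → Fin N) (hmeas : ∀ j, Measurable (c j))
    (hindep : iIndepFun c volume)
    (hunif : ∀ j i, (volume {ω | c j ω = i}) = (N : ENNReal)⁻¹)
    (A : Ω → Matrix (Fin N) (Fin B) ℝ)
    (hA : ∀ ω, A ω = Matrix.of (fun i j => if c j ω = i then (1 : ℝ) else 0))
    (Z : Matrix (Fin N) (Fin N) ℝ) :
    mExp (fun ω => A ω * (A ω)ᵀ * Z * (A ω) * (A ω)ᵀ) =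
      ((B : ℝ) / (N : ℝ)) • Matrix.diagonal (fun i => Z i i)
        + ((B : ℝ) * ((B : ℝ) - 1) / (N : ℝ) ^ 2) • Z := by
  have hp : ∀ b i, volume.real (c b ⁻¹' {i}) = (N : ℝ)⁻¹ := fun b i => by
    rw [measureReal_def, show c b ⁻¹' {i} = {ω | c b ω = i} from rfl, hunif,
      ENNReal.toReal_inv, ENNReal.toReal_natCast]
  have hentry : ∀ ω i j, (A ω * (A ω)ᵀ * Z * A ω * (A ω)ᵀ) i j =
      Z i j * ((∑ b, if c b ω = i then (1 : ℝ) else 0) *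
        (∑ b, if c b ω = j then (1 : ℝ) else 0)) := by
    intro ω i j
    have hAAt :
        A ω * (A ω)ᵀ = diagonal fun k => ∑ b, if c b ω = k then (1 : ℝ) else 0 := by
      rw [hA ω]
      exact oneHot_mul_transpose ℝ fun b => c b ω
    rw [Matrix.mul_assoc (A ω * (A ω)ᵀ * Z), hAAt, mul_diagonal, diagonal_mul]
    ring
  ext i j
  have hN : (N : ℝ) ≠ 0 := by have := i.pos; positivity
  simp only [mExp, of_apply, hentry, integral_const_mul,
    hindep.integral_sum_ite_eq_mul_sum_ite_eq hmeas hp, Fintype.card_fin, Matrix.add_apply,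
    Matrix.smul_apply, diagonal_apply, smul_eq_mul]
  split_ifs with hij
  · subst hij
    field_simp
  · field_simp
    ring

/-- If `A ∈ ℝ^{N×B}` has i.i.d. columns, each uniformly distributed over the
standard basis vectors of `ℝ^N`, then for any fixed `Z ∈ ℝ^{N×N}`,
`E[A Aᵀ Z A Aᵀ] = (B/N)·diag(Z) + (B(B−1)/N²)·Z`. -/
theorem stmt_3 {Ω : Type*} [MeasureSpace Ω] [IsProbabilityMeasure (volume : Measure Ω)]
    {N B : ℕ} (hN : 1 ≤ N) (hB : 1 ≤ B)
    (c : Fin B → Ω → Fin N) (hmeas : ∀ j, Measurable (c j))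
    (hindep : iIndepFun c volume)
    (hunif : ∀ j i, (volume {ω | c j ω = i}) = (N : ENNReal)⁻¹)
    (A : Ω → Matrix (Fin N) (Fin B) ℝ)
    (hA : ∀ ω, A ω = Matrix.of (fun i j => if c j ω = i then (1 : ℝ) else 0))
    (Z : Matrix (Fin N) (Fin N) ℝ) :
    mExp (fun ω => A ω * (A ω)ᵀ * Z * (A ω) * (A ω)ᵀ) =
      ((B : ℝ) / (N : ℝ)) • Matrix.diagonal (fun i => Z i i)
        + ((B : ℝ) * ((B : ℝ) - 1) / (N : ℝ) ^ 2) • Z :=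
  stmt_3_general c hmeas hindep hunif A hA Z
end

section
/- Let X ∈ ℝ^{n×N}, Y ∈ ℝ^{p×N}, and for σ > 0 let W_σ* = Y Xᵀ (X Xᵀ + σ²N·Id)⁻¹. Then for 0 < σ_{t+1} ≤ σ_t, ‖W_{σ_{t+1}}* − W_{σ_t}*‖_F ≤ N(σ_t² − σ_{t+1}²)·‖Y Xᵀ [(X Xᵀ)⁺]²‖_F. -/
/-!
Write `A = X Xᵀ`, `a = σ_{t+1}² N` and `b = σ_t² N`. By the resolvent identity the difference
of the two ridge solutions is `(b - a) • Y Xᵀ (A + a)⁻¹ (A + b)⁻¹`. The Moore–Penrose projection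
`A P` fixes the rows of `Xᵀ`, so `Y Xᵀ = Y Xᵀ P² A²` and the difference becomes
`(b - a) • Y Xᵀ P² · A (A + a)⁻¹ · A (A + b)⁻¹`. For `A ⪰ 0` and `c > 0` the factor
`A (A + c)⁻¹` is a contraction, and right multiplication by a contraction does not increase
the Frobenius norm.
-/

open Matrix

noncomputable def frobNorm {m n : ℕ} (A : Matrix (Fin m) (Fin n) ℝ) : ℝ :=
  Real.sqrt (∑ i, ∑ j, (A i j) ^ 2)

/-- `P` is the Moore–Penrose pseudoinverse of `A`: the four Penrose equations. -/
def IsMoorePenrose {n : ℕ} (A P : Matrix (Fin n) (Fin n) ℝ) : Prop :=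
  A * P * A = A ∧ P * A * P = P ∧ (A * P)ᵀ = A * P ∧ (P * A)ᵀ = P * A

lemma frobNorm_eq_sqrt_trace {m n : ℕ} (A : Matrix (Fin m) (Fin n) ℝ) :
    frobNorm A = √(A * Aᵀ).trace := by
  simp [frobNorm, trace, mul_apply, sq]

lemma frobNorm_smul {m n : ℕ} {c : ℝ} (hc : 0 ≤ c) (A : Matrix (Fin m) (Fin n) ℝ) :
    frobNorm (c • A) = c * frobNorm A := by
  simp only [frobNorm, Matrix.smul_apply, smul_eq_mul, mul_pow, ← Finset.mul_sum]
  rw [Real.sqrt_mul (sq_nonneg c), Real.sqrt_sq hc]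

lemma frobNorm_mul_le_of_posSemidef_one_sub {m k l : ℕ} (M : Matrix (Fin m) (Fin k) ℝ)
    {C : Matrix (Fin k) (Fin l) ℝ} (hC : (1 - C * Cᵀ).PosSemidef) :
    frobNorm (M * C) ≤ frobNorm M := by
  rw [frobNorm_eq_sqrt_trace, frobNorm_eq_sqrt_trace]
  apply Real.sqrt_le_sqrt
  have hgap : M * Mᵀ - M * C * (M * C)ᵀ = M * (1 - C * Cᵀ) * Mᵀ := by
    simp only [transpose_mul, Matrix.mul_sub, Matrix.sub_mul, Matrix.mul_one, Matrix.mul_assoc]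
  have := (hC.mul_mul_conjTranspose_same M).trace_nonneg
  rw [conjTranspose_eq_transpose_of_trivial, ← hgap, trace_sub] at this
  linarith

section Resolvent

variable {ι : Type*} [Fintype ι] [DecidableEq ι]

lemma Matrix.commute_nonsing_inv_right {M Q : Matrix ι ι ℝ} (h : Commute M Q) :
    Commute M Q⁻¹ := by
  by_cases hQ : IsUnit Q.det
  · obtain ⟨u, rfl⟩ := (isUnit_iff_isUnit_det Q).mpr hQ
    rw [← coe_units_inv]
    exact h.units_inv_right
  · rw [nonsing_inv_apply_not_isUnit _ hQ]
    exact Commute.zero_right M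

lemma Matrix.commute_inv_add_smul_one (A : Matrix ι ι ℝ) (c : ℝ) :
    Commute A (A + c • 1)⁻¹ :=
  commute_nonsing_inv_right <| (Commute.refl A).add_right ((Commute.one_right A).smul_right c)

lemma Matrix.PosSemidef.isUnit_det_add_smul_one {A : Matrix ι ι ℝ} (hA : A.PosSemidef) {c : ℝ}
    (hc : 0 < c) : IsUnit (A + c • 1).det :=
  (PosDef.posSemidef_add hA (PosDef.one.smul hc)).det_pos.ne'.isUnit

lemma Matrix.inv_add_smul_one_sub_inv_add_smul_one {A : Matrix ι ι ℝ} {a b : ℝ}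
    (ha : IsUnit (A + a • 1).det) (hb : IsUnit (A + b • 1).det) :
    (A + a • 1)⁻¹ - (A + b • 1)⁻¹ = (b - a) • ((A + a • 1)⁻¹ * (A + b • 1)⁻¹) := by
  rw [inv_sub_inv (by simp only [isUnit_iff_isUnit_det, ha, hb]),
    show A + b • 1 - (A + a • 1) = (b - a) • (1 : Matrix ι ι ℝ) by module]
  simp

lemma Matrix.PosSemidef.posSemidef_one_sub_mul_inv_add_smul_one {A : Matrix ι ι ℝ}
    (hA : A.PosSemidef) {c : ℝ} (hc : 0 < c) :
    (1 - A * (A + c • 1)⁻¹ * (A * (A + c • 1)⁻¹)ᵀ).PosSemidef := by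
  have hAT : Aᵀ = A := by simpa [conjTranspose_eq_transpose_of_trivial] using hA.isHermitian.eq
  have hRT : (A + c • 1)⁻¹ᵀ = (A + c • 1)⁻¹ := by
    rw [transpose_nonsing_inv, transpose_add, hAT]; simp
  have hRA : (A + c • 1)⁻¹ * A = 1 - c • (A + c • 1)⁻¹ := by
    rw [eq_sub_iff_add_eq]
    simpa [Matrix.mul_add] using nonsing_inv_mul _ (hA.isUnit_det_add_smul_one hc)
  have hgap : 1 - A * (A + c • 1)⁻¹ * (A * (A + c • 1)⁻¹)ᵀ
      = c • ((A + c • 1)⁻¹ * ((2 : ℝ) • A + c • 1) * (A + c • 1)⁻¹ᵀ) := by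
    rw [transpose_mul, hRT, hAT, (commute_inv_add_smul_one A c).eq]
    simp only [Matrix.mul_add, Matrix.add_mul, Matrix.mul_smul, Matrix.smul_mul, Matrix.mul_one,
      hRA, Matrix.sub_mul, Matrix.mul_sub, Matrix.one_mul]
    module
  rw [hgap]
  refine PosSemidef.smul ?_ hc.le
  have := ((hA.smul (zero_le_two (α := ℝ))).add (PosSemidef.one.smul hc.le))
    |>.mul_mul_conjTranspose_same (A + c • 1)⁻¹
  rwa [conjTranspose_eq_transpose_of_trivial] at this

end Resolvent

namespace IsMoorePenrose

variable {n : ℕ}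

lemma commute_of_transpose_eq {A P : Matrix (Fin n) (Fin n) ℝ} (hP : IsMoorePenrose A P)
    (hA : Aᵀ = A) : Commute A P := by
  obtain ⟨hAPA, -, hAP, hPA⟩ := hP
  have hl : A * P = Pᵀ * A := by rw [← hAP, transpose_mul, hA]
  have hr : P * A = A * Pᵀ := by rw [← hPA, transpose_mul, hA]
  show A * P = P * A
  calc A * P = Pᵀ * (A * P * A) := by rw [hAPA, hl]
    _ = Pᵀ * A * (P * A) := by simp only [Matrix.mul_assoc]
    _ = A * P * (A * Pᵀ) := by rw [← hl, ← hr]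
    _ = A * P * A * Pᵀ := by simp only [Matrix.mul_assoc]
    _ = P * A := by rw [hAPA, hr]

lemma transpose_mul_gram_mul {N : ℕ} {X : Matrix (Fin n) (Fin N) ℝ}
    {P : Matrix (Fin n) (Fin n) ℝ} (hP : IsMoorePenrose (X * Xᵀ) P) :
    Xᵀ * (X * Xᵀ * P) = Xᵀ := by
  obtain ⟨hAPA, -, hAP, -⟩ := hP
  have hAE : X * Xᵀ * (X * Xᵀ * P) = X * Xᵀ := by
    have := congrArg transpose hAPA
    rwa [transpose_mul, hAP, transpose_mul, transpose_transpose] at this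
  have hZ : (Xᵀ * (X * Xᵀ * P - 1))ᴴ * (Xᵀ * (X * Xᵀ * P - 1)) = 0 := by
    rw [conjTranspose_eq_transpose_of_trivial, transpose_mul, transpose_transpose,
      Matrix.mul_assoc, ← Matrix.mul_assoc X, Matrix.mul_sub, hAE, Matrix.mul_one, sub_self,
      Matrix.mul_zero]
  simpa only [Matrix.mul_sub, Matrix.mul_one, sub_eq_zero] using
    conjTranspose_mul_self_eq_zero.mp hZ

lemma transpose_mul_sq_mul_gram_sq {N : ℕ} {X : Matrix (Fin n) (Fin N) ℝ}
    {P : Matrix (Fin n) (Fin n) ℝ} (hP : IsMoorePenrose (X * Xᵀ) P) :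
    Xᵀ * (P * P) * (X * Xᵀ) * (X * Xᵀ) = Xᵀ := by
  have hc := hP.commute_of_transpose_eq (by rw [transpose_mul, transpose_transpose])
  have hE := hP.transpose_mul_gram_mul
  have hsq : P * P * (X * Xᵀ * (X * Xᵀ)) = X * Xᵀ * P * (X * Xᵀ * P) := by
    rw [← sq, ← sq, ← hc.symm.mul_pow, ← hc.eq, sq]
  calc Xᵀ * (P * P) * (X * Xᵀ) * (X * Xᵀ) = Xᵀ * (P * P * (X * Xᵀ * (X * Xᵀ))) := by
        simp only [Matrix.mul_assoc]
    _ = Xᵀ * (X * Xᵀ * P) * (X * Xᵀ * P) := by rw [hsq, ← Matrix.mul_assoc]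
    _ = Xᵀ := by rw [hE, hE]

end IsMoorePenrose

theorem frobNorm_ridge_sub_le {n N p : ℕ} {X : Matrix (Fin n) (Fin N) ℝ}
    (Y : Matrix (Fin p) (Fin N) ℝ) {P : Matrix (Fin n) (Fin n) ℝ}
    (hP : IsMoorePenrose (X * Xᵀ) P) {a b : ℝ} (ha : 0 < a) (hab : a ≤ b) :
    frobNorm (Y * Xᵀ * (X * Xᵀ + a • 1)⁻¹ - Y * Xᵀ * (X * Xᵀ + b • 1)⁻¹)
      ≤ (b - a) * frobNorm (Y * Xᵀ * (P * P)) := by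
  have hA : (X * Xᵀ).PosSemidef := by
    simpa [conjTranspose_eq_transpose_of_trivial] using posSemidef_self_mul_conjTranspose X
  have hb : 0 < b := ha.trans_le hab
  have hres := inv_add_smul_one_sub_inv_add_smul_one (hA.isUnit_det_add_smul_one ha)
    (hA.isUnit_det_add_smul_one hb)
  have hfactor : Y * Xᵀ * ((X * Xᵀ + a • 1)⁻¹ * (X * Xᵀ + b • 1)⁻¹)
      = Y * Xᵀ * (P * P) * (X * Xᵀ * (X * Xᵀ + a • 1)⁻¹) * (X * Xᵀ * (X * Xᵀ + b • 1)⁻¹) :=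
    calc _ = Y * (Xᵀ * (P * P) * (X * Xᵀ) * (X * Xᵀ))
            * ((X * Xᵀ + a • 1)⁻¹ * (X * Xᵀ + b • 1)⁻¹) := by
          rw [hP.transpose_mul_sq_mul_gram_sq]
      _ = Y * Xᵀ * (P * P) * (X * Xᵀ * (X * Xᵀ * (X * Xᵀ + a • 1)⁻¹))
            * (X * Xᵀ + b • 1)⁻¹ := by
          simp only [Matrix.mul_assoc]
      _ = Y * Xᵀ * (P * P) * (X * Xᵀ * ((X * Xᵀ + a • 1)⁻¹ * (X * Xᵀ)))
            * (X * Xᵀ + b • 1)⁻¹ := by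
          rw [(commute_inv_add_smul_one (X * Xᵀ) a).eq]
      _ = _ := by simp only [Matrix.mul_assoc]
  calc _ = frobNorm ((b - a) • (Y * Xᵀ * (P * P) * (X * Xᵀ * (X * Xᵀ + a • 1)⁻¹)
          * (X * Xᵀ * (X * Xᵀ + b • 1)⁻¹))) := by
        rw [← Matrix.mul_sub, hres, Matrix.mul_smul, hfactor]
    _ ≤ (b - a) * frobNorm (Y * Xᵀ * (P * P)) := by
        rw [frobNorm_smul (sub_nonneg.mpr hab)]
        gcongr
        exact (frobNorm_mul_le_of_posSemidef_one_sub _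
          (hA.posSemidef_one_sub_mul_inv_add_smul_one hb)).trans
          (frobNorm_mul_le_of_posSemidef_one_sub _
            (hA.posSemidef_one_sub_mul_inv_add_smul_one ha))

theorem stmt_7_general {n N p : ℕ}
    (X : Matrix (Fin n) (Fin N) ℝ) (Y : Matrix (Fin p) (Fin N) ℝ)
    (P : Matrix (Fin n) (Fin n) ℝ) (hP : IsMoorePenrose (X * Xᵀ) P)
    (σt σt1 : ℝ) (h0 : 0 < σt1) (hle : σt1 ≤ σt) :
    frobNorm
        (Y * Xᵀ * (X * Xᵀ + (σt1 ^ 2 * (N : ℝ)) • (1 : Matrix (Fin n) (Fin n) ℝ))⁻¹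
          - Y * Xᵀ * (X * Xᵀ + (σt ^ 2 * (N : ℝ)) • (1 : Matrix (Fin n) (Fin n) ℝ))⁻¹)
      ≤ (N : ℝ) * (σt ^ 2 - σt1 ^ 2) * frobNorm (Y * Xᵀ * (P * P)) := by
  rcases N.eq_zero_or_pos with rfl | hN
  · simp [frobNorm]
  have hsq : σt1 ^ 2 ≤ σt ^ 2 := pow_le_pow_left₀ h0.le hle 2
  calc _ ≤ (σt ^ 2 * N - σt1 ^ 2 * N) * frobNorm (Y * Xᵀ * (P * P)) :=
        frobNorm_ridge_sub_le Y hP (by positivity) (by gcongr)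
    _ = _ := by ring

/-- For `0 < σ_{t+1} ≤ σ_t`, the ridge solutions `W_σ* = Y Xᵀ (X Xᵀ + σ²N·Id)⁻¹`
satisfy `‖W_{σ_{t+1}}* − W_{σ_t}*‖_F ≤ N(σ_t² − σ_{t+1}²)·‖Y Xᵀ [(X Xᵀ)⁺]²‖_F`. -/
theorem stmt_7 {n N p : ℕ} (hN : 1 ≤ N)
    (X : Matrix (Fin n) (Fin N) ℝ) (Y : Matrix (Fin p) (Fin N) ℝ)
    (P : Matrix (Fin n) (Fin n) ℝ) (hP : IsMoorePenrose (X * Xᵀ) P)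
    (σt σt1 : ℝ) (h0 : 0 < σt1) (hle : σt1 ≤ σt) :
    frobNorm
        (Y * Xᵀ * (X * Xᵀ + (σt1 ^ 2 * (N : ℝ)) • (1 : Matrix (Fin n) (Fin n) ℝ))⁻¹
          - Y * Xᵀ * (X * Xᵀ + (σt ^ 2 * (N : ℝ)) • (1 : Matrix (Fin n) (Fin n) ℝ))⁻¹)
      ≤ (N : ℝ) * (σt ^ 2 - σt1 ^ 2) * frobNorm (Y * Xᵀ * (P * P)) :=
  stmt_7_general X Y P hP σt σt1 h0 hle
end

section
/- Suppose X_{t+1} = X_t(Id − E[A_t]) + B_t where A_t ∈ ℝ^{n×n} are independent random nonnegative-definite matrices with ‖A_t‖₂ ≤ 2 almost surely, B_t ∈ ℝ^{p×n} satisfy ∑_t ‖B_t‖_F < ∞, and Q is an orthogonal projection such that for every t, the product ∏_{s=t}^T (Id − E[A_s])·Q → 0 as T → ∞. Then X_t Q → 0. -/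
open MeasureTheory ProbabilityTheory Matrix Filter

noncomputable def specNorm {m n : ℕ} (A : Matrix (Fin m) (Fin n) ℝ) : ℝ :=
  ‖(LinearMap.toContinuousLinearMap
    (Matrix.toEuclideanLin A : EuclideanSpace ℝ (Fin n) →ₗ[ℝ] EuclideanSpace ℝ (Fin m)))‖

/-- The ordered product `M t * M (t+1) * ⋯ * M T`. -/
noncomputable def ordProd {n : ℕ} (M : ℕ → Matrix (Fin n) (Fin n) ℝ) (t T : ℕ) :
    Matrix (Fin n) (Fin n) ℝ :=
  ((List.range (T + 1 - t)).map (fun k => M (t + k))).prod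

/-! Each `A_t` lies between `0` and `2` in the Loewner order, hence so does `E[A_t]`, and the
functional calculus turns `0 ≤ S ≤ 2` into `‖1 - S‖₂ ≤ 1`. Unrolling the recursion,
`X_{T+1} Q = X_0 (∏_{s ≤ T} (1 - E[A_s])) Q + ∑_{t ≤ T} B_t (∏_{t < s ≤ T} (1 - E[A_s])) Q`.
The first term tends to `0` by hypothesis; in the second every summand tends to `0` and is
bounded by `‖B_t‖_F ‖Q‖₂`, which is summable, so it tends to `0` by dominated convergence. -/

-- With these scopes `specNorm A` is definitionally `‖A‖`, and `≤` on square matrices is the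
-- Loewner order.
open scoped Matrix.Norms.L2Operator MatrixOrder

section IsometricCFC

variable {A : Type*} [NormedRing A] [StarRing A] [NormedAlgebra ℝ A] [PartialOrder A]
  [StarOrderedRing A] [IsometricContinuousFunctionalCalculus ℝ A IsSelfAdjoint]
  [NonnegSpectrumClass ℝ A]

lemma IsSelfAdjoint.le_algebraMap_of_norm_le {a : A} (ha : IsSelfAdjoint a) {r : ℝ}
    (h : ‖a‖ ≤ r) : a ≤ algebraMap ℝ A r :=
  (le_algebraMap_iff_spectrum_le ha).mpr fun x hx =>
    (Real.le_norm_self x).trans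
      ((IsometricContinuousFunctionalCalculus.norm_spectrum_le a hx ha).trans h)

lemma norm_one_sub_le_one_of_nonneg_of_le_two {a : A} (h0 : 0 ≤ a)
    (h2 : a ≤ algebraMap ℝ A 2) : ‖1 - a‖ ≤ 1 := by
  have ha : IsSelfAdjoint a := IsSelfAdjoint.of_nonneg h0
  have hspec := (le_algebraMap_iff_spectrum_le ha).mp h2
  rw [← cfc_id' ℝ a, ← cfc_one ℝ a, ← cfc_sub _ _ a]
  refine norm_cfc_le zero_le_one fun x hx => ?_
  rw [Pi.one_apply, Real.norm_eq_abs, abs_le]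
  constructor <;> linarith [spectrum_nonneg_of_nonneg h0 hx, hspec x hx]

end IsometricCFC

section Expectation

variable {Ω : Type*} [MeasureSpace Ω] {m n : ℕ}

lemma dotProduct_mExp_mulVec {M : Ω → Matrix (Fin m) (Fin n) ℝ}
    (hM : ∀ i j, Integrable (fun ω => M ω i j)) (v : Fin m → ℝ) (w : Fin n → ℝ) :
    v ⬝ᵥ mExp M *ᵥ w = ∫ ω, v ⬝ᵥ M ω *ᵥ w := by
  simp only [dotProduct, mulVec, Finset.mul_sum]
  rw [integral_finsetSum _ fun i _ => integrable_finsetSum _ fun j _ =>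
    ((hM i j).mul_const _).const_mul _]
  refine Finset.sum_congr rfl fun i _ => ?_
  rw [integral_finsetSum _ fun j _ => ((hM i j).mul_const _).const_mul _]
  simp only [mExp, of_apply, ← integral_mul_const, ← integral_const_mul]

lemma mExp_posSemidef {M : Ω → Matrix (Fin n) (Fin n) ℝ}
    (hM : ∀ i j, Integrable (fun ω => M ω i j)) (hpsd : ∀ᵐ ω, (M ω).PosSemidef) :
    (mExp M).PosSemidef := by
  refine .of_dotProduct_mulVec_nonneg ?_ fun v => ?_
  · ext i j
    refine integral_congr_ae ?_
    filter_upwards [hpsd] with ω hω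
    exact congrFun (congrFun hω.isHermitian i) j
  · rw [star_trivial, dotProduct_mExp_mulVec hM]
    refine integral_nonneg_of_ae ?_
    filter_upwards [hpsd] with ω hω
    simpa using hω.dotProduct_mulVec_nonneg v

lemma mExp_const_sub [IsProbabilityMeasure (volume : Measure Ω)]
    {M : Ω → Matrix (Fin m) (Fin n) ℝ} (hM : ∀ i j, Integrable (fun ω => M ω i j))
    (C : Matrix (Fin m) (Fin n) ℝ) :
    mExp (fun ω => C - M ω) = C - mExp M := by
  ext i j
  simp [mExp, integral_sub (integrable_const _) (hM i j)]

lemma norm_one_sub_mExp_le_one [IsProbabilityMeasure (volume : Measure Ω)]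
    {M : Ω → Matrix (Fin n) (Fin n) ℝ} (hM : ∀ i j, Integrable (fun ω => M ω i j))
    (hpsd : ∀ᵐ ω, (M ω).PosSemidef) (hnorm : ∀ᵐ ω, ‖M ω‖ ≤ 2) :
    ‖1 - mExp M‖ ≤ 1 := by
  refine norm_one_sub_le_one_of_nonneg_of_le_two
    (nonneg_iff_posSemidef.mpr (mExp_posSemidef hM hpsd)) ?_
  have hle : ∀ᵐ ω, (algebraMap ℝ _ 2 - M ω).PosSemidef := by
    filter_upwards [hpsd, hnorm] with ω hω hω2
    exact le_iff.mp (hω.isHermitian.isSelfAdjoint.le_algebraMap_of_norm_le hω2)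
  have := mExp_posSemidef (M := fun ω => algebraMap ℝ _ 2 - M ω)
    (fun i j => (integrable_const _).sub (hM i j)) hle
  rwa [mExp_const_sub hM, ← le_iff] at this

end Expectation

lemma l2_opNorm_le_frobNorm {m n : ℕ} (A : Matrix (Fin m) (Fin n) ℝ) : ‖A‖ ≤ frobNorm A := by
  refine ContinuousLinearMap.opNorm_le_bound _ (Real.sqrt_nonneg _) fun x => ?_
  refine (pow_le_pow_iff_left₀ (norm_nonneg _)
    (mul_nonneg (Real.sqrt_nonneg _) (norm_nonneg _)) two_ne_zero).mp ?_
  rw [mul_pow, Real.sq_sqrt (by positivity), EuclideanSpace.real_norm_sq_eq,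
    EuclideanSpace.real_norm_sq_eq, Finset.sum_mul]
  refine Finset.sum_le_sum fun i _ => ?_
  change (∑ j, A i j * x j) ^ 2 ≤ _
  exact Finset.sum_mul_sq_le_sq_mul_sq _ (A i) x

section OrdProd

variable {n : ℕ} (M : ℕ → Matrix (Fin n) (Fin n) ℝ)

lemma ordProd_succ_self (T : ℕ) : ordProd M (T + 1) T = 1 := by
  simp [ordProd]

lemma ordProd_succ_right {t T : ℕ} (h : t ≤ T + 1) :
    ordProd M t (T + 1) = ordProd M t T * M (T + 1) := by
  rw [ordProd, ordProd, show T + 1 + 1 - t = T + 1 - t + 1 by omega, List.range_succ,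
    List.map_append, List.prod_append, List.map_singleton, List.prod_singleton,
    show t + (T + 1 - t) = T + 1 by omega]

lemma norm_ordProd_le_one (hM : ∀ s, ‖M s‖ ≤ 1) (t T : ℕ) : ‖ordProd M t T‖ ≤ 1 := by
  rw [ordProd]
  induction List.range (T + 1 - t) with
  | nil =>
    rw [List.map_nil, List.prod_nil, cstar_norm_def, map_one]
    exact ContinuousLinearMap.norm_id_le
  | cons k l ih =>
    rw [List.map_cons, List.prod_cons]
    exact (norm_mul_le _ _).trans (mul_le_one₀ (hM _) (norm_nonneg _) ih)

end OrdProd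

lemma eq_mul_ordProd_add_sum_of_recurrence {p n : ℕ} {M : ℕ → Matrix (Fin n) (Fin n) ℝ}
    {B X : ℕ → Matrix (Fin p) (Fin n) ℝ} (hrec : ∀ t, X (t + 1) = X t * M t + B t) (T : ℕ) :
    X (T + 1) = X 0 * ordProd M 0 T +
      ∑ t ∈ Finset.range (T + 1), B t * ordProd M (t + 1) T := by
  induction T with
  | zero => simp [hrec 0, ordProd]
  | succ T ih =>
    rw [hrec (T + 1), ih, Matrix.add_mul, Matrix.sum_mul, Finset.sum_range_succ _ (T + 1),
      ordProd_succ_self, Matrix.mul_one, ordProd_succ_right M (Nat.zero_le _),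
      ← Matrix.mul_assoc, add_assoc]
    congr 2
    refine Finset.sum_congr rfl fun t ht => ?_
    rw [ordProd_succ_right M (by simp at ht; omega), Matrix.mul_assoc]

lemma Filter.Tendsto.const_matrix_mul {α m n k R : Type*} [Fintype n]
    [NonUnitalNonAssocSemiring R] [TopologicalSpace R] [IsTopologicalSemiring R] {l : Filter α}
    {f : α → Matrix n k R} {a : Matrix n k R} (C : Matrix m n R) (hf : Tendsto f l (nhds a)) :
    Tendsto (fun x => C * f x) l (nhds (C * a)) :=
  ((continuous_const.matrix_mul continuous_id).tendsto a).comp hf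

lemma tendsto_finset_sum_of_dominated {α β G : Type*} {l : Filter α} [NormedAddCommGroup G]
    [CompleteSpace G] {s : α → Finset β} {f : α → β → G} {bound : β → ℝ}
    (hsum : Summable bound) (hbound : ∀ a k, ‖f a k‖ ≤ bound k)
    (hlim : ∀ k, Tendsto (f · k) l (nhds 0)) :
    Tendsto (fun a => ∑ k ∈ s a, f a k) l (nhds 0) := by
  have hsum_eq (a : α) : ∑ k ∈ s a, f a k = ∑' k, (s a : Set β).indicator (f a) k :=
    sum_eq_tsum_indicator _ _
  simp_rw [hsum_eq]
  simpa using tendsto_tsum_of_dominated_convergence (g := 0) hsum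
    (fun k => squeeze_zero_norm (fun a => norm_indicator_le_norm_self (f a) k)
      (tendsto_norm_zero.comp (hlim k)))
    (.of_forall fun a k => (norm_indicator_le_norm_self (f a) k).trans (hbound a k))

theorem stmt_8_general {Ω : Type*} [MeasureSpace Ω] [IsProbabilityMeasure (volume : Measure Ω)]
    {n p : ℕ} (A : ℕ → Ω → Matrix (Fin n) (Fin n) ℝ)
    (hpsd : ∀ t, ∀ᵐ ω, (A t ω).PosSemidef)
    (hbdd : ∀ t, ∀ᵐ ω, specNorm (A t ω) ≤ 2)
    (hint : ∀ t i j, Integrable (fun ω => A t ω i j))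
    (B : ℕ → Matrix (Fin p) (Fin n) ℝ)
    (hB : Summable (fun t => frobNorm (B t)))
    (Q : Matrix (Fin n) (Fin n) ℝ)
    (hprod : ∀ t, Tendsto (fun T => ordProd (fun s => 1 - mExp (A s)) t T * Q)
      atTop (nhds 0))
    (X : ℕ → Matrix (Fin p) (Fin n) ℝ)
    (hrec : ∀ t, X (t + 1) = X t * (1 - mExp (A t)) + B t) :
    Tendsto (fun t => X t * Q) atTop (nhds 0) := by
  set M : ℕ → Matrix (Fin n) (Fin n) ℝ := fun s => 1 - mExp (A s)
  have hM (s : ℕ) : ‖M s‖ ≤ 1 := norm_one_sub_mExp_le_one (hint s) (hpsd s) (hbdd s)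
  have hinit : Tendsto (fun T => X 0 * (ordProd M 0 T * Q)) atTop (nhds 0) := by
    simpa using (hprod 0).const_matrix_mul (X 0)
  have hforced : Tendsto (fun T => ∑ t ∈ Finset.range (T + 1), B t * (ordProd M (t + 1) T * Q))
      atTop (nhds 0) := by
    refine tendsto_finset_sum_of_dominated (hB.mul_right ‖Q‖) (fun T t => ?_) fun t => ?_
    · calc ‖B t * (ordProd M (t + 1) T * Q)‖ ≤ ‖B t‖ * (‖ordProd M (t + 1) T‖ * ‖Q‖) :=
            (l2_opNorm_mul _ _).trans (by gcongr; exact l2_opNorm_mul _ _)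
        _ ≤ frobNorm (B t) * (1 * ‖Q‖) := by
            gcongr
            exacts [Real.sqrt_nonneg _, l2_opNorm_le_frobNorm _, norm_ordProd_le_one M hM _ _]
        _ = frobNorm (B t) * ‖Q‖ := by rw [one_mul]
    · simpa using (hprod (t + 1)).const_matrix_mul (B t)
  rw [← tendsto_add_atTop_iff_nat 1]
  simp_rw [eq_mul_ordProd_add_sum_of_recurrence hrec, Matrix.add_mul, Matrix.sum_mul,
    Matrix.mul_assoc]
  simpa using hinit.add hforced

/-- One-sided decay: if `X_{t+1} = X_t (Id − E[A_t]) + B_t`, with `A_t` random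
nonnegative definite with `‖A_t‖₂ ≤ 2` a.s., `∑ ‖B_t‖_F < ∞`, and the products
`(∏_{s=t}^T (Id − E[A_s])) Q → 0` as `T → ∞` for every `t`, then `X_t Q → 0`. -/
theorem stmt_8 {Ω : Type*} [MeasureSpace Ω] [IsProbabilityMeasure (volume : Measure Ω)]
    {n p : ℕ} (A : ℕ → Ω → Matrix (Fin n) (Fin n) ℝ)
    (hpsd : ∀ t, ∀ᵐ ω, (A t ω).PosSemidef)
    (hbdd : ∀ t, ∀ᵐ ω, specNorm (A t ω) ≤ 2)
    (hint : ∀ t i j, Integrable (fun ω => A t ω i j))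
    (B : ℕ → Matrix (Fin p) (Fin n) ℝ)
    (hB : Summable (fun t => frobNorm (B t)))
    (Q : Matrix (Fin n) (Fin n) ℝ) (hQsymm : Qᵀ = Q) (hQproj : Q * Q = Q)
    (hprod : ∀ t, Tendsto (fun T => ordProd (fun s => 1 - mExp (A s)) t T * Q)
      atTop (nhds 0))
    (X : ℕ → Matrix (Fin p) (Fin n) ℝ)
    (hrec : ∀ t, X (t + 1) = X t * (1 - mExp (A t)) + B t) :
    Tendsto (fun t => X t * Q) atTop (nhds 0) :=
  stmt_8_general A hpsd hbdd hint B hB Q hprod X hrec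
end

section
/- For 0 < α < 1 < β and C > 0, the sum S_t := ∑_{s=1}^t (1+s)^{−β} exp(−C∫_{s+1}^{t+1} r^{−α} dr) satisfies S_t = O(t^{α−β}) as t → ∞. -/
/-!
Concavity of `r ↦ r ^ (1 - α)` bounds the integral `∫_{s+1}^{t+1} r^{-α} dr` below by
`(t - s) (t + 1)^{-α}`, so each term of `S_t` is at most `(1 + s)^{-β} e^{-x (t - s)}` with
`x ≍ C t^{-α}`. Terms with `s ≤ t/2` are then at most `e^{-x t / 2}`, which is
`exp(-c t^{1-α})` and hence negligible even after summing `t` of them, while the terms with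
`s > t/2` carry the weight `(t/2)^{-β}` in front of a geometric series of sum
`≤ 1 + x⁻¹ ≍ t^α`.
-/

open Filter Asymptotics Real Finset

lemma Real.mul_rpow_sub_one_mul_sub_le_rpow_sub_rpow {p a b : ℝ} (hp0 : 0 ≤ p) (hp1 : p ≤ 1)
    (ha : 0 < a) (hab : a ≤ b) : p * b ^ (p - 1) * (b - a) ≤ b ^ p - a ^ p := by
  have hb : 0 < b := ha.trans_le hab
  have hbern := rpow_one_add_le_one_add_mul_self (s := a / b - 1)
    (by linarith [div_pos ha hb]) hp0 hp1
  rw [add_sub_cancel, div_rpow ha.le hb.le, div_le_iff₀ (rpow_pos_of_pos hb p)] at hbern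
  have hexpand : (1 + p * (a / b - 1)) * b ^ p = b ^ p - p * (b ^ p / b) * (b - a) := by
    field_simp; ring
  rw [rpow_sub_one hb.ne']
  linarith

lemma Real.add_one_rpow_le_two_mul_rpow {t α : ℝ} (ht : 1 ≤ t) (hα0 : 0 ≤ α) (hα1 : α ≤ 1) :
    (t + 1) ^ α ≤ 2 * t ^ α := by
  have h2 : (2 : ℝ) ^ α ≤ 2 := by
    simpa using rpow_le_rpow_of_exponent_le one_le_two hα1
  calc (t + 1) ^ α ≤ (2 * t) ^ α := rpow_le_rpow (by positivity) (by linarith) hα0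
    _ = 2 ^ α * t ^ α := mul_rpow zero_le_two (by positivity)
    _ ≤ 2 * t ^ α := by gcongr

lemma Real.one_sub_exp_neg_inv_le {x : ℝ} (hx : 0 < x) : (1 - exp (-x))⁻¹ ≤ 1 + x⁻¹ := by
  have hx' : x ≤ exp x - 1 := by linarith [add_one_le_exp x]
  have hrw : (1 - exp (-x))⁻¹ = 1 + (exp x - 1)⁻¹ := by
    have : exp x - 1 ≠ 0 := by linarith
    rw [exp_neg]; field_simp; ring
  rw [hrw]
  gcongr

lemma exp_neg_mul_rpow_sub_rpow_div_le {α C s t : ℝ} (hα0 : 0 ≤ α) (hα1 : α < 1) (hC : 0 ≤ C)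
    (hs : -1 < s) (hst : s ≤ t) :
    exp (-C * (((t + 1) ^ (1 - α) - (s + 1) ^ (1 - α)) / (1 - α)))
      ≤ exp (-(C * (t + 1) ^ (-α)) * (t - s)) := by
  have hconc := mul_rpow_sub_one_mul_sub_le_rpow_sub_rpow (p := 1 - α) (a := s + 1) (b := t + 1)
    (by linarith) (by linarith) (by linarith) (by linarith)
  rw [show 1 - α - 1 = -α by ring, show t + 1 - (s + 1) = t - s by ring] at hconc
  have hdiv : (t + 1) ^ (-α) * (t - s)
      ≤ ((t + 1) ^ (1 - α) - (s + 1) ^ (1 - α)) / (1 - α) := by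
    rw [le_div_iff₀ (by linarith)]; linarith
  rw [exp_le_exp, neg_mul, neg_mul, neg_le_neg_iff, mul_assoc]
  exact mul_le_mul_of_nonneg_left hdiv hC

lemma sum_Icc_exp_neg_mul_sub_le {x : ℝ} (hx : 0 < x) (t : ℕ) :
    ∑ s ∈ Icc 1 t, exp (-x * (t - s)) ≤ 1 + x⁻¹ := by
  have hq0 : 0 ≤ exp (-x) := (exp_pos _).le
  have hq1 : exp (-x) < 1 := exp_lt_one_iff.2 (by linarith)
  calc ∑ s ∈ Icc 1 t, exp (-x * (t - s)) = ∑ s ∈ Ico 1 (t + 1), exp (-x) ^ (t - s) := by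
        rw [Ico_add_one_right_eq_Icc]
        refine sum_congr rfl fun s hs => ?_
        rw [← exp_nat_mul, Nat.cast_sub (mem_Icc.1 hs).2]; ring_nf
    _ = ∑ k ∈ Ico 0 t, exp (-x) ^ k := by simpa using sum_Ico_reflect (exp (-x) ^ ·) 1 le_rfl
    _ ≤ exp (-x) ^ 0 / (1 - exp (-x)) := geom_sum_Ico_le_of_lt_one hq0 hq1
    _ ≤ 1 + x⁻¹ := by simpa using one_sub_exp_neg_inv_le hx

lemma sum_Icc_rpow_neg_mul_exp_neg_mul_sub_le {β x : ℝ} (hβ : 0 ≤ β) (hx : 0 < x) (t : ℕ) :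
    ∑ s ∈ Icc 1 t, (1 + (s : ℝ)) ^ (-β) * exp (-x * (t - s))
      ≤ t * exp (-x * t / 2) + ((t : ℝ) / 2) ^ (-β) * (1 + x⁻¹) := by
  have hterm : ∀ s ∈ Icc 1 t, (1 + (s : ℝ)) ^ (-β) * exp (-x * (t - s))
      ≤ exp (-x * t / 2) + ((t : ℝ) / 2) ^ (-β) * exp (-x * (t - s)) := by
    intro s hs
    obtain ⟨h1s, hst⟩ := mem_Icc.1 hs
    have h1s' : (1 : ℝ) ≤ s := by exact_mod_cast h1s
    have hst' : (s : ℝ) ≤ t := by exact_mod_cast hst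
    have hexp_pos := exp_pos (-x * t / 2)
    have htail_nonneg : 0 ≤ ((t : ℝ) / 2) ^ (-β) * exp (-x * (t - s)) := by positivity
    rcases le_or_gt (2 * (s : ℝ)) t with hfar | hnear
    · have hdecay : exp (-x * (t - s)) ≤ exp (-x * t / 2) := by
        rw [exp_le_exp]; nlinarith
      have hweight : (1 + (s : ℝ)) ^ (-β) ≤ 1 :=
        rpow_le_one_of_one_le_of_nonpos (by linarith) (by linarith)
      nlinarith [exp_pos (-x * (t - s))]
    · have hweight : (1 + (s : ℝ)) ^ (-β) ≤ ((t : ℝ) / 2) ^ (-β) :=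
        rpow_le_rpow_of_nonpos (by linarith) (by linarith) (by linarith)
      nlinarith [exp_pos (-x * (t - s))]
  calc ∑ s ∈ Icc 1 t, (1 + (s : ℝ)) ^ (-β) * exp (-x * (t - s))
      ≤ ∑ s ∈ Icc 1 t, (exp (-x * t / 2) + ((t : ℝ) / 2) ^ (-β) * exp (-x * (t - s))) :=
        sum_le_sum hterm
    _ = t * exp (-x * t / 2) + ((t : ℝ) / 2) ^ (-β) * ∑ s ∈ Icc 1 t, exp (-x * (t - s)) := by
        rw [sum_add_distrib, sum_const, Nat.card_Icc, ← mul_sum, nsmul_eq_mul,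
          Nat.add_sub_cancel]
    _ ≤ t * exp (-x * t / 2) + ((t : ℝ) / 2) ^ (-β) * (1 + x⁻¹) := by
        gcongr; exact sum_Icc_exp_neg_mul_sub_le hx t

lemma isLittleO_rpow_mul_exp_neg_mul_rpow {γ c : ℝ} (hγ : 0 < γ) (hc : 0 < c) (a b : ℝ) :
    (fun t : ℝ => t ^ a * exp (-c * t ^ γ)) =o[atTop] fun t => t ^ b := by
  have hexp : (fun t : ℝ => exp (-c * t ^ γ)) =o[atTop] fun t => t ^ (b - a) := by
    refine ((isLittleO_exp_neg_mul_rpow_atTop hc ((b - a) / γ)).comp_tendsto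
      (tendsto_rpow_atTop hγ)).congr' EventuallyEq.rfl ?_
    filter_upwards [eventually_ge_atTop 0] with t ht
    rw [Function.comp_apply, ← rpow_mul ht, mul_div_cancel₀ _ hγ.ne']
  refine ((isBigO_refl (fun t : ℝ => t ^ a) atTop).mul_isLittleO hexp).congr' EventuallyEq.rfl ?_
  filter_upwards [eventually_gt_atTop 0] with t ht
  rw [← rpow_add ht, add_sub_cancel]

/-- The sum `S_t`, with `C ∫_{s+1}^{t+1} r^{-α} dr` written in closed form. -/
noncomputable def dampedSum (α β C : ℝ) (t : ℕ) : ℝ :=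
  ∑ s ∈ Icc 1 t, (1 + (s : ℝ)) ^ (-β) *
    exp (-C * ((((t : ℝ) + 1) ^ (1 - α) - ((s : ℝ) + 1) ^ (1 - α)) / (1 - α)))

lemma dampedSum_le {α β C : ℝ} (hα0 : 0 < α) (hα1 : α < 1) (hβ : 0 ≤ β) (hC : 0 < C) {t : ℕ}
    (ht : 1 ≤ t) :
    dampedSum α β C t ≤ t * exp (-(C / 4) * t ^ (1 - α)) + 2 ^ β * (1 + 2 / C) * t ^ (α - β) := by
  have ht' : (1 : ℝ) ≤ t := by exact_mod_cast ht
  have ht0 : (0 : ℝ) < t := by linarith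
  set x := C / 2 * (t : ℝ) ^ (-α) with hxdef
  have hx : 0 < x := by positivity
  have hxle : x ≤ C * ((t : ℝ) + 1) ^ (-α) := by
    have h := add_one_rpow_le_two_mul_rpow ht' hα0.le hα1.le
    calc x = C * (2 * (t : ℝ) ^ α)⁻¹ := by rw [hxdef, rpow_neg ht0.le]; ring
      _ ≤ C * ((t : ℝ) + 1) ^ (-α) := by rw [rpow_neg (by positivity)]; gcongr
  have hdecay : -x * t / 2 = -(C / 4) * (t : ℝ) ^ (1 - α) := by
    rw [hxdef, show 1 - α = -α + 1 by ring, rpow_add_one ht0.ne']; ring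
  have hweight : ((t : ℝ) / 2) ^ (-β) * (1 + x⁻¹) ≤ 2 ^ β * (1 + 2 / C) * t ^ (α - β) := by
    have hinv : x⁻¹ = 2 / C * (t : ℝ) ^ α := by rw [hxdef, rpow_neg ht0.le]; field_simp
    have hhalf : ((t : ℝ) / 2) ^ (-β) = 2 ^ β * (t : ℝ) ^ (-β) := by
      rw [div_rpow ht0.le zero_le_two, rpow_neg ht0.le, rpow_neg zero_le_two]; field_simp
    have hprod : (t : ℝ) ^ (-β) * t ^ α = t ^ (α - β) := by
      rw [← rpow_add ht0]; ring_nf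
    have hone : (1 : ℝ) ≤ (t : ℝ) ^ α := one_le_rpow ht' hα0.le
    rw [hinv, hhalf, ← hprod]
    have : 0 ≤ (2 : ℝ) ^ β * (t : ℝ) ^ (-β) := by positivity
    nlinarith [div_pos two_pos hC]
  calc dampedSum α β C t ≤ ∑ s ∈ Icc 1 t, (1 + (s : ℝ)) ^ (-β) * exp (-x * (t - s)) := by
        refine sum_le_sum fun s hs => mul_le_mul_of_nonneg_left ?_ (by positivity)
        have hst : (s : ℝ) ≤ t := by exact_mod_cast (mem_Icc.1 hs).2
        refine (exp_neg_mul_rpow_sub_rpow_div_le hα0.le hα1 hC.le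
          (by linarith [s.cast_nonneg (α := ℝ)]) hst).trans ?_
        rw [exp_le_exp]; nlinarith
    _ ≤ t * exp (-x * t / 2) + ((t : ℝ) / 2) ^ (-β) * (1 + x⁻¹) :=
        sum_Icc_rpow_neg_mul_exp_neg_mul_sub_le hβ hx t
    _ ≤ t * exp (-(C / 4) * t ^ (1 - α)) + 2 ^ β * (1 + 2 / C) * t ^ (α - β) := by
        rw [hdecay]; linarith

/-- For `0 < α < 1 < β` and `C > 0`, the sums
`S_t = ∑_{s=1}^t (1+s)^{−β} exp(−C ((t+1)^{1−α} − (s+1)^{1−α})/(1−α))`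
satisfy `S_t = O(t^{α−β})` as `t → ∞`. -/
theorem stmt_11 (α β C : ℝ) (hα0 : 0 < α) (hα1 : α < 1) (hβ : 1 < β) (hC : 0 < C) :
    (fun t : ℕ => ∑ s ∈ Finset.Icc 1 t,
        (1 + (s : ℝ)) ^ (-β) *
          Real.exp (-C * ((((t : ℝ) + 1) ^ (1 - α) - ((s : ℝ) + 1) ^ (1 - α)) / (1 - α))))
      =O[atTop] (fun t : ℕ => (t : ℝ) ^ (α - β)) := by
  have hbulk := ((isLittleO_rpow_mul_exp_neg_mul_rpow (sub_pos.2 hα1) (by positivity : 0 < C / 4)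
    1 (α - β)).comp_tendsto tendsto_natCast_atTop_atTop).isBigO
  have htail := isBigO_const_mul_self (2 ^ β * (1 + 2 / C)) (fun t : ℕ => (t : ℝ) ^ (α - β)) atTop
  refine (IsBigO.of_bound' ?_).trans (hbulk.add htail)
  filter_upwards [eventually_ge_atTop 1] with t ht
  have hS : 0 ≤ dampedSum α β C t := sum_nonneg fun s _ => by positivity
  change ‖dampedSum α β C t‖ ≤ _
  simp only [Function.comp_apply, rpow_one]
  rw [norm_of_nonneg hS, norm_of_nonneg (by positivity)]
  exact dampedSum_le hα0 hα1 (by linarith) hC ht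
end

section
/- Consider augmented gradient descent W_{t+1} = W_t − (2η_t/N)(W_t X_t − Y_t)X_tᵀ with (X_t, Y_t) independent of W_t, and let W_t* := E[Y_t X_tᵀ] E[X_t X_tᵀ]⁺. Then the means obey the recursion E[W_{t+1}] − W_{t+1}* = (E[W_t] − W_t*)(Id − (2η_t/N) E[X_t X_tᵀ]) − (W_{t+1}* − W_t*). -/
/-!
Taking expectations of the update, independence of `W_t` from `(X_t, Y_t)` factorises
`E[W_t X_t X_tᵀ] = E[W_t] E[X_t X_tᵀ]`. With `A = E[X_t X_tᵀ]` and `A P A = A`, the columns of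
`1 - P A` lie in `ker A`, hence almost surely in `ker X_tᵀ`; so `E[Y_t X_tᵀ] (1 - P A) = 0`, i.e.
`W_t* A = E[Y_t X_tᵀ]`. Substituting this normal equation into the mean update gives the
recursion by linear algebra.
-/

open MeasureTheory ProbabilityTheory Matrix

instance matMeas {m n : ℕ} : MeasurableSpace (Matrix (Fin m) (Fin n) ℝ) :=
  MeasurableSpace.pi

section MatrixExpectation

variable {Ω : Type*} [MeasureSpace Ω] {m k l : ℕ}

@[simp]
lemma mExp_apply (M : Ω → Matrix (Fin m) (Fin k) ℝ) (i : Fin m) (j : Fin k) :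
    mExp M i j = ∫ ω, M ω i j :=
  rfl

lemma mExp_congr_ae {M M' : Ω → Matrix (Fin m) (Fin k) ℝ} (h : M =ᵐ[volume] M') :
    mExp M = mExp M' := by
  ext i j
  exact integral_congr_ae (h.mono fun ω hω => by simp only [hω])

lemma mExp_zero : mExp (fun _ : Ω => (0 : Matrix (Fin m) (Fin k) ℝ)) = 0 := by
  ext i j
  simp

lemma mExp_sub {M M' : Ω → Matrix (Fin m) (Fin k) ℝ}
    (hM : ∀ i j, Integrable (fun ω => M ω i j)) (hM' : ∀ i j, Integrable (fun ω => M' ω i j)) :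
    mExp (fun ω => M ω - M' ω) = mExp M - mExp M' := by
  ext i j
  exact integral_sub (hM i j) (hM' i j)

lemma mExp_smul (c : ℝ) (M : Ω → Matrix (Fin m) (Fin k) ℝ) :
    mExp (fun ω => c • M ω) = c • mExp M := by
  ext i j
  exact integral_const_mul c _

lemma mExp_mul_const {M : Ω → Matrix (Fin m) (Fin k) ℝ}
    (hM : ∀ i j, Integrable (fun ω => M ω i j)) (B : Matrix (Fin k) (Fin l) ℝ) :
    mExp (fun ω => M ω * B) = mExp M * B := by
  ext i j
  simp only [mExp_apply, mul_apply]
  rw [integral_finsetSum _ fun r _ => (hM i r).mul_const _]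
  exact Finset.sum_congr rfl fun r _ => integral_mul_const _ _

lemma measurable_matrix_apply (i : Fin m) (j : Fin k) :
    Measurable (fun M : Matrix (Fin m) (Fin k) ℝ => M i j) :=
  (measurable_pi_apply j).comp (measurable_pi_apply i)

lemma measurable_mul_transpose_self :
    Measurable (fun M : Matrix (Fin m) (Fin k) ℝ => M * Mᵀ) := by
  refine measurable_pi_lambda _ fun i => measurable_pi_lambda _ fun j => ?_
  simp only [mul_apply, transpose_apply]
  exact Finset.measurable_sum _ fun r _ =>
    (measurable_matrix_apply i r).mul (measurable_matrix_apply j r)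

section Independent

variable {A : Ω → Matrix (Fin m) (Fin k) ℝ} {B : Ω → Matrix (Fin k) (Fin l) ℝ}

lemma ProbabilityTheory.IndepFun.matrix_apply (hAB : IndepFun A B volume)
    (i : Fin m) (r : Fin k) (j : Fin l) :
    IndepFun (fun ω => A ω i r) (fun ω => B ω r j) volume :=
  hAB.comp (measurable_matrix_apply i r) (measurable_matrix_apply r j)

lemma ProbabilityTheory.IndepFun.integrable_matrix_mul_apply (hAB : IndepFun A B volume)
    (hA : ∀ i j, Integrable (fun ω => A ω i j)) (hB : ∀ i j, Integrable (fun ω => B ω i j))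
    (i : Fin m) (j : Fin l) :
    Integrable (fun ω => (A ω * B ω) i j) := by
  simp only [mul_apply]
  exact integrable_finsetSum _ fun r _ =>
    (hAB.matrix_apply i r j).integrable_mul (hA i r) (hB r j)

lemma ProbabilityTheory.IndepFun.mExp_mul (hAB : IndepFun A B volume)
    (hA : ∀ i j, Integrable (fun ω => A ω i j)) (hB : ∀ i j, Integrable (fun ω => B ω i j)) :
    mExp (fun ω => A ω * B ω) = mExp A * mExp B := by
  ext i j
  simp only [mExp_apply, mul_apply]
  rw [integral_finsetSum _ fun (r : Fin k) _ =>
    ((hAB.matrix_apply i r j).integrable_mul (hA i r) (hB r j) :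
      Integrable (fun ω => A ω i r * B ω r j))]
  exact Finset.sum_congr rfl fun r _ =>
    (hAB.matrix_apply i r j).integral_fun_mul_eq_mul_integral
      (hA i r).aestronglyMeasurable (hB r j).aestronglyMeasurable

end Independent

section KernelCondition

variable {n d : ℕ} {X : Ω → Matrix (Fin n) (Fin d) ℝ} {M : Matrix (Fin n) (Fin n) ℝ}

lemma ae_transpose_mul_eq_zero (hker : ∀ u, M *ᵥ u = 0 → ∀ᵐ ω, (X ω)ᵀ *ᵥ u = 0)
    {B : Matrix (Fin n) (Fin l) ℝ} (hMB : M * B = 0) :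
    ∀ᵐ ω, (X ω)ᵀ * B = 0 := by
  have hcol : ∀ j, ∀ᵐ ω, (X ω)ᵀ *ᵥ (fun r => B r j) = 0 := fun j =>
    hker _ (funext fun i => congrFun (congrFun hMB i) j)
  filter_upwards [ae_all_iff.mpr hcol] with ω hω
  ext r j
  exact congrFun (hω j) r

lemma mExp_mul_transpose_mul_mul_eq_of_ker {p : ℕ} {Y : Ω → Matrix (Fin p) (Fin d) ℝ}
    {P : Matrix (Fin n) (Fin n) ℝ}
    (hker : ∀ u, M *ᵥ u = 0 → ∀ᵐ ω, (X ω)ᵀ *ᵥ u = 0) (hMPM : M * P * M = M)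
    (hYX : ∀ i j, Integrable (fun ω => (Y ω * (X ω)ᵀ) i j)) :
    mExp (fun ω => Y ω * (X ω)ᵀ) * P * M = mExp (fun ω => Y ω * (X ω)ᵀ) := by
  have hMB : M * (1 - P * M) = 0 := by
    rw [Matrix.mul_sub, Matrix.mul_one, ← Matrix.mul_assoc, hMPM, sub_self]
  have hzero : mExp (fun ω => Y ω * (X ω)ᵀ * (1 - P * M)) = 0 := by
    refine (mExp_congr_ae ?_).trans mExp_zero
    filter_upwards [ae_transpose_mul_eq_zero hker hMB] with ω hω
    rw [Matrix.mul_assoc, hω, Matrix.mul_zero]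
  rw [mExp_mul_const hYX, Matrix.mul_sub, Matrix.mul_one, sub_eq_zero] at hzero
  rw [Matrix.mul_assoc, ← hzero]

end KernelCondition

end MatrixExpectation

theorem stmt_12_general {Ω : Type*} [MeasureSpace Ω]
    {n p : ℕ} (N : ℕ) (Nd : ℕ → ℕ) (η : ℕ → ℝ)
    (W : ℕ → Ω → Matrix (Fin p) (Fin n) ℝ)
    (X : (t : ℕ) → Ω → Matrix (Fin n) (Fin (Nd t)) ℝ)
    (Y : (t : ℕ) → Ω → Matrix (Fin p) (Fin (Nd t)) ℝ)
    -- the dynamics of augmented gradient descent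
    (hdyn : ∀ t ω, W (t + 1) ω =
      W t ω - ((2 * η t) / (N : ℝ)) • ((W t ω * X t ω - Y t ω) * (X t ω)ᵀ))
    -- `(X_t, Y_t)` is independent of `W_t`
    (hindep : ∀ t, IndepFun (W t) (fun ω => (X t ω, Y t ω)) volume)
    -- the kernel of `E[X_t X_tᵀ]` is a.s. contained in the kernel of `X_tᵀ`
    (hker : ∀ t (u : Fin n → ℝ),
      (mExp (fun ω => X t ω * (X t ω)ᵀ)).mulVec u = 0 →
        ∀ᵐ ω, (X t ω)ᵀ.mulVec u = 0)
    -- integrability of all relevant entries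
    (hintW : ∀ t i j, Integrable (fun ω => W t ω i j))
    (hintXX : ∀ t i j, Integrable (fun ω => (X t ω * (X t ω)ᵀ) i j))
    (hintYX : ∀ t i j, Integrable (fun ω => (Y t ω * (X t ω)ᵀ) i j))
    -- the Moore–Penrose pseudoinverses and proxy optima
    (Pm : ℕ → Matrix (Fin n) (Fin n) ℝ)
    (hPm : ∀ t, IsMoorePenrose (mExp (fun ω => X t ω * (X t ω)ᵀ)) (Pm t))
    (Wstar : ℕ → Matrix (Fin p) (Fin n) ℝ)
    (hWstar : ∀ t, Wstar t = mExp (fun ω => Y t ω * (X t ω)ᵀ) * Pm t) :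
    ∀ t, mExp (W (t + 1)) - Wstar (t + 1) =
      (mExp (W t) - Wstar t) *
          (1 - ((2 * η t) / (N : ℝ)) • mExp (fun ω => X t ω * (X t ω)ᵀ))
        - (Wstar (t + 1) - Wstar t) := by
  intro t
  set c : ℝ := (2 * η t) / (N : ℝ)
  set A := mExp (fun ω => X t ω * (X t ω)ᵀ)
  have hindepWXX : IndepFun (W t) (fun ω => X t ω * (X t ω)ᵀ) volume :=
    (hindep t).comp measurable_id (measurable_mul_transpose_self.comp measurable_fst)
  have hintWXX := hindepWXX.integrable_matrix_mul_apply (hintW t) (hintXX t)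
  have hW_succ : W (t + 1) = fun ω =>
      W t ω - c • (W t ω * (X t ω * (X t ω)ᵀ) - Y t ω * (X t ω)ᵀ) := by
    funext ω
    rw [hdyn, Matrix.sub_mul, Matrix.mul_assoc]
  have hmean : mExp (W (t + 1)) =
      mExp (W t) - c • (mExp (W t) * A - mExp (fun ω => Y t ω * (X t ω)ᵀ)) := by
    have hint_step : ∀ i j, Integrable (fun ω =>
        (c • (W t ω * (X t ω * (X t ω)ᵀ) - Y t ω * (X t ω)ᵀ)) i j) := fun i j =>
      ((hintWXX i j).sub (hintYX t i j)).const_mul c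
    rw [hW_succ, mExp_sub (hintW t) hint_step, mExp_smul, mExp_sub hintWXX (hintYX t),
      hindepWXX.mExp_mul (hintW t) (hintXX t)]
  have hnormal : Wstar t * A = mExp (fun ω => Y t ω * (X t ω)ᵀ) :=
    hWstar t ▸ mExp_mul_transpose_mul_mul_eq_of_ker (hker t) (hPm t).1 (hintYX t)
  rw [hmean, ← hnormal, Matrix.sub_mul, Matrix.mul_sub, Matrix.mul_sub, Matrix.mul_one,
    Matrix.mul_one, Matrix.mul_smul, Matrix.mul_smul, smul_sub]
  abel

/-- The mean recursion for augmented gradient descent: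
`E[W_{t+1}] − W_{t+1}* = (E[W_t] − W_t*)(Id − (2η_t/N) E[X_t X_tᵀ]) − (W_{t+1}* − W_t*)`
where `W_t* = E[Y_t X_tᵀ] E[X_t X_tᵀ]⁺`. -/
theorem stmt_12 {Ω : Type*} [MeasureSpace Ω] [IsProbabilityMeasure (volume : Measure Ω)]
    {n p : ℕ} (N : ℕ) (hN : 1 ≤ N) (Nd : ℕ → ℕ) (η : ℕ → ℝ) (hη : ∀ t, 0 < η t)
    (W : ℕ → Ω → Matrix (Fin p) (Fin n) ℝ)
    (X : (t : ℕ) → Ω → Matrix (Fin n) (Fin (Nd t)) ℝ)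
    (Y : (t : ℕ) → Ω → Matrix (Fin p) (Fin (Nd t)) ℝ)
    -- the dynamics of augmented gradient descent
    (hdyn : ∀ t ω, W (t + 1) ω =
      W t ω - ((2 * η t) / (N : ℝ)) • ((W t ω * X t ω - Y t ω) * (X t ω)ᵀ))
    -- `(X_t, Y_t)` is independent of `W_t`
    (hindep : ∀ t, IndepFun (W t) (fun ω => (X t ω, Y t ω)) volume)
    -- the kernel of `E[X_t X_tᵀ]` is a.s. contained in the kernel of `X_tᵀ`
    (hker : ∀ t (u : Fin n → ℝ),
      (mExp (fun ω => X t ω * (X t ω)ᵀ)).mulVec u = 0 →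
        ∀ᵐ ω, (X t ω)ᵀ.mulVec u = 0)
    -- integrability of all relevant entries
    (hintW : ∀ t i j, Integrable (fun ω => W t ω i j))
    (hintXX : ∀ t i j, Integrable (fun ω => (X t ω * (X t ω)ᵀ) i j))
    (hintYX : ∀ t i j, Integrable (fun ω => (Y t ω * (X t ω)ᵀ) i j))
    (hintWXX : ∀ t i j, Integrable (fun ω => (W t ω * X t ω * (X t ω)ᵀ) i j))
    -- the Moore–Penrose pseudoinverses and proxy optima
    (Pm : ℕ → Matrix (Fin n) (Fin n) ℝ)
    (hPm : ∀ t, IsMoorePenrose (mExp (fun ω => X t ω * (X t ω)ᵀ)) (Pm t))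
    (Wstar : ℕ → Matrix (Fin p) (Fin n) ℝ)
    (hWstar : ∀ t, Wstar t = mExp (fun ω => Y t ω * (X t ω)ᵀ) * Pm t) :
    ∀ t, mExp (W (t + 1)) - Wstar (t + 1) =
      (mExp (W t) - Wstar t) *
          (1 - ((2 * η t) / (N : ℝ)) • mExp (fun ω => X t ω * (X t ω)ᵀ))
        - (Wstar (t + 1) - Wstar t) :=
  stmt_12_general N Nd η W X Y hdyn hindep hker hintW hintXX hintYX Pm hPm Wstar hWstar
end
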